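/- For a = 1, 2, let M_a ⊆ B(H_a) be a von Neumann algebra and let (R_a, T_a, ψ_a) be a bipartite exact embezzlement protocol for α in (M_a, M_a', H_a). Assume the states X ↦ ⟨X ψ_a, ψ_a⟩ are faithful on M_a and on M_a' (i.e., if X ∈ M_a (resp. M_a') is positive and ⟨X ψ_a, ψ_a⟩ = 0 then X = 0). Set V_{a,i} = (R_a i 0)* and W_{a,j} = (T_a j 0)*. Then for all lists μ, ν, β, γ over Fin d, ⟨V_{1,μ} (V_{1,ν})* W_{1,β} (W_{1,γ})* ψ₁, ψ₁⟩ = ⟨V_{2,μ} (V_{2,ν})* W_{2,β} (W_{2,γ})* ψ₂, ψ₂⟩, where V_{a,μ} and W_{a,μ} denote the ordered products over the list μ. (Equivalently: there is a unique state s on O_d ⊗_max O_d with s(v_i ⊗ w_j) = δ_{ij} α i, and every bipartite exact embezzlement protocol for α with faithful marginals induces this state.) -/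

import Mathlib

open scoped InnerProductSpace
open ContinuousLinearMap

/-- The block operator on `ℓ²(Fin d; H)` associated with a `d × d` matrix of operators on `H`,
acting by `(R x) i = ∑ j, (R i j) (x j)`. -/
noncomputable def blockOp {H : Type*} [NormedAddCommGroup H] [InnerProductSpace ℂ H] {d : ℕ}
    (R : Fin d → Fin d → H →L[ℂ] H) :
    (PiLp 2 fun _ : Fin d => H) →L[ℂ] (PiLp 2 fun _ : Fin d => H) :=
  (((PiLp.continuousLinearEquiv 2 ℂ (fun _ : Fin d => H)).symm :
      (∀ _ : Fin d, H) →L[ℂ] (PiLp 2 fun _ : Fin d => H))) ∘L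
    (ContinuousLinearMap.pi fun i => ∑ j, (R i j) ∘L (ContinuousLinearMap.proj j)) ∘L
    (((PiLp.continuousLinearEquiv 2 ℂ (fun _ : Fin d => H)) :
      (PiLp 2 fun _ : Fin d => H) →L[ℂ] (∀ _ : Fin d, H)))

variable {H : Type*} [NormedAddCommGroup H] [InnerProductSpace ℂ H] [CompleteSpace H]

/-- `R` is a contraction in `M_d ⊗ M`: all blocks lie in `M` and the block operator on
`ℓ²(Fin d; H)` has operator norm at most `1`. -/
def IsContractionIn (M : VonNeumannAlgebra H) {d : ℕ}
    (R : Fin d → Fin d → H →L[ℂ] H) : Prop :=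
  (∀ i j, R i j ∈ M) ∧ ‖blockOp R‖ ≤ 1

/-- A bipartite exact embezzlement protocol for `α` in `(M, M', H)`: `R` is a contraction in
`M_d ⊗ M`, `T` is a contraction with blocks in the commutant `M'`, `ψ` is a unit vector, and
`(R i 0)(T j 0) ψ = δ_{ij} α i • ψ` for all `i, j`. -/
def BipartiteProtocol (M : VonNeumannAlgebra H) {d : ℕ} [NeZero d] (α : Fin d → ℝ)
    (R T : Fin d → Fin d → H →L[ℂ] H) (ψ : H) : Prop :=
  IsContractionIn M R ∧ IsContractionIn M.commutant T ∧ ‖ψ‖ = 1 ∧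
    ∀ i j, (R i 0) ((T j 0) ψ) = (if i = j then (α i : ℂ) else 0) • ψ

/-- A monopartite exact embezzlement protocol for `α` in `(M, H)`: `R` is a contraction in
`M_d ⊗ M`, `ψ` is a unit vector, and `⟨(R i 0)* X (R j 0) ψ, ψ⟩ = δ_{ij} (α i)² ⟨X ψ, ψ⟩`
for all `X ∈ M` and all `i, j`. -/
def MonopartiteProtocol (M : VonNeumannAlgebra H) {d : ℕ} [NeZero d] (α : Fin d → ℝ)
    (R : Fin d → Fin d → H →L[ℂ] H) (ψ : H) : Prop :=
  IsContractionIn M R ∧ ‖ψ‖ = 1 ∧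
    ∀ X ∈ M, ∀ i j : Fin d,
      ⟪(adjoint (R i 0)) (X ((R j 0) ψ)), ψ⟫_ℂ
        = (if i = j then ((α i : ℂ)) ^ 2 else 0) * ⟪X ψ, ψ⟫_ℂ

/-- The orthogonal projection of `H` onto the closure of `{Y ψ : Y ∈ S}`, as an operator
on `H`. -/
noncomputable def suppProjOn (S : Set (H →L[ℂ] H)) (ψ : H) : H →L[ℂ] H :=
  letI K := (Submodule.span ℂ ((fun Y : H →L[ℂ] H => Y ψ) '' S)).topologicalClosure
  K.subtypeL ∘L (K.orthogonalProjection : H →L[ℂ] K)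

/-- The support projection of the state `⟨· ψ, ψ⟩` on `M`: the orthogonal projection onto
the closure of `M' ψ`. -/
noncomputable def suppP (M : VonNeumannAlgebra H) (ψ : H) : H →L[ℂ] H :=
  suppProjOn (M.commutant : Set (H →L[ℂ] H)) ψ

/-- The support projection of the state `⟨· ψ, ψ⟩` on `M'`: the orthogonal projection onto
the closure of `M ψ`. -/
noncomputable def suppP' (M : VonNeumannAlgebra H) (ψ : H) : H →L[ℂ] H :=
  suppProjOn (M : Set (H →L[ℂ] H)) ψ

/-!
Write `A i = R i 0`, `B j = T j 0`, and for a word `l = [i₁, …, iₘ]` put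
`V_l = (A i₁)* ⋯ (A iₘ)*` (`starProd A l`), `W_l = (B i₁)* ⋯ (B iₘ)*` and `α_l = α i₁ ⋯ α iₘ`.
The first columns of `R` and `T` are column contractions, so `A i (B j ψ) = δ_ij α_i ψ` and
`∑ α_i² = 1` force `‖A i ψ‖ = ‖B i ψ‖ = α_i`. Then `y = B i ψ` attains `‖A i y‖ = ‖y‖`, whence
`B i ψ = α_i (A i)* ψ`, and symmetrically `A i ψ = α_i (B i)* ψ`. Since the two sides commute,
this propagates to words, `W_l* ψ = α_l V_l ψ`, and yields the Cuntz relations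
`A i (V_{j :: l} ψ) = δ_ij V_l ψ`. Moreover `⟪V_l* ψ, ψ⟫ = α_l² ⟪V_l* ψ, ψ⟫`, and `α_l < 1` for
nonempty `l` because `d ≥ 2`, so these inner products vanish. Together this evaluates every moment
as an explicit function of `α` (`cuntzMoment`), the same for every protocol.
-/

section Operators

variable {E : Type*} [NormedAddCommGroup E] [InnerProductSpace ℂ E] {d : ℕ}

theorem blockOp_single (R : Fin d → Fin d → E →L[ℂ] E) (j : Fin d) (x : E) :
    blockOp R (PiLp.single 2 j x) = WithLp.toLp 2 fun i => R i j x := by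
  ext i
  simp [blockOp, apply_ite]

theorem sum_norm_sq_apply_le_of_norm_blockOp_le_one {R : Fin d → Fin d → E →L[ℂ] E}
    (hR : ‖blockOp R‖ ≤ 1) (j : Fin d) (x : E) : ∑ i, ‖R i j x‖ ^ 2 ≤ ‖x‖ ^ 2 := by
  have hle : ‖blockOp R (PiLp.single 2 j x)‖ ≤ ‖x‖ := by
    simpa [PiLp.norm_single] using (blockOp R).le_of_opNorm_le hR (PiLp.single 2 j x)
  rw [blockOp_single, ← sq_le_sq₀ (norm_nonneg _) (norm_nonneg _),
    PiLp.norm_sq_eq_of_L2] at hle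
  exact hle

theorem norm_le_one_of_sum_norm_sq_apply_le {ι : Type*} [Fintype ι] {S : ι → E →L[ℂ] E}
    (hS : ∀ x, ∑ i, ‖S i x‖ ^ 2 ≤ ‖x‖ ^ 2) (i : ι) : ‖S i‖ ≤ 1 := by
  refine (S i).opNorm_le_bound zero_le_one fun x => ?_
  rw [one_mul, ← sq_le_sq₀ (norm_nonneg _) (norm_nonneg _)]
  exact (Finset.single_le_sum (fun k _ => sq_nonneg ‖S k x‖) (Finset.mem_univ i)).trans (hS x)

theorem norm_apply_eq_of_apply_apply_eq_ite_smul {A B : Fin d → E →L[ℂ] E} {ψ : E}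
    {α : Fin d → ℝ} (hA : ∀ x, ∑ i, ‖A i x‖ ^ 2 ≤ ‖x‖ ^ 2) (hB : ∀ x, ∑ j, ‖B j x‖ ^ 2 ≤ ‖x‖ ^ 2)
    (hψ : ‖ψ‖ = 1) (hα : ∀ i, 0 ≤ α i) (hsum : ∑ i, α i ^ 2 = 1)
    (hAB : ∀ i j, A i (B j ψ) = (if i = j then (α i : ℂ) else 0) • ψ) (j : Fin d) :
    ‖B j ψ‖ = α j := by
  have hge : ∀ j ∈ Finset.univ, α j ^ 2 ≤ ‖B j ψ‖ ^ 2 := fun j _ => by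
    refine le_of_eq_of_le ?_ (hA (B j ψ))
    simp [hAB, norm_smul, hψ, apply_ite, sq_abs]
  have hle : ∑ j, ‖B j ψ‖ ^ 2 ≤ ∑ j, α j ^ 2 := by simpa [hsum, hψ] using hB ψ
  have heq := (Finset.sum_eq_sum_iff_of_le hge).mp (le_antisymm (Finset.sum_le_sum hge) hle) j
    (Finset.mem_univ j)
  exact (sq_eq_sq₀ (norm_nonneg _) (hα j)).mp heq.symm

theorem commute_list_prod_map {ι M : Type*} [Monoid M] {f g : ι → M}
    (h : ∀ i j, Commute (f i) (g j)) (l m : List ι) : Commute (l.map f).prod (m.map g).prod :=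
  Commute.list_prod_left _ _ <| List.forall_mem_map.mpr fun i _ =>
    Commute.list_prod_right _ _ <| List.forall_mem_map.mpr fun j _ => h i j

theorem list_prod_reverse_map_apply_eq_smul {X Y : Fin d → E →L[ℂ] E} {ψ : E} {α : Fin d → ℝ}
    (hXY : ∀ i j, Commute (X i) (Y j)) (hY : ∀ j, Y j ψ = (α j : ℂ) • X j ψ)
    (l : List (Fin d)) :
    (l.reverse.map Y).prod ψ = ((l.map α).prod : ℂ) • (l.map X).prod ψ := by
  induction l with
  | nil => simp
  | cons j l ih =>
    have hcomm : Commute (X j) (l.reverse.map Y).prod :=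
      Commute.list_prod_right _ _ <| List.forall_mem_map.mpr fun k _ => hXY j k
    rw [List.reverse_cons, List.map_append, List.prod_append, List.map_singleton,
      List.prod_singleton, mul_apply_eq_comp, hY, map_smul, ← mul_apply_eq_comp, ← hcomm.eq,
      mul_apply_eq_comp, ih, map_smul, smul_smul, List.map_cons, List.map_cons, List.prod_cons,
      List.prod_cons, mul_apply_eq_comp, Complex.ofReal_mul]

end Operators

theorem lt_one_of_sum_sq_eq_one {ι : Type*} [Fintype ι] [Nontrivial ι] {α : ι → ℝ}
    (hα : ∀ i, 0 < α i) (hsum : ∑ i, α i ^ 2 = 1) (i : ι) : α i < 1 := by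
  obtain ⟨k, hk⟩ := exists_ne i
  have hlt : α i ^ 2 < ∑ j, α j ^ 2 :=
    Finset.single_lt_sum hk (Finset.mem_univ i) (Finset.mem_univ k) (pow_pos (hα k) 2)
      fun j _ _ => sq_nonneg (α j)
  exact (sq_lt_one_iff₀ (hα i).le).mp (hsum ▸ hlt)

theorem inner_star_apply_left (S : H →L[ℂ] H) (x y : H) : ⟪star S x, y⟫_ℂ = ⟪x, S y⟫_ℂ := by
  rw [star_eq_adjoint, adjoint_inner_left]

theorem inner_star_apply_right (S : H →L[ℂ] H) (x y : H) : ⟪x, star S y⟫_ℂ = ⟪S x, y⟫_ℂ := by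
  rw [star_eq_adjoint, adjoint_inner_right]

theorem star_apply_apply_eq_of_norm_le_one {S : H →L[ℂ] H} (hS : ‖S‖ ≤ 1) {y : H}
    (hy : ‖S y‖ = ‖y‖) : star S (S y) = y := by
  have hre : RCLike.re ⟪star S (S y), y⟫_ℂ = ‖y‖ ^ 2 := by
    rw [star_eq_adjoint, adjoint_inner_left, inner_self_eq_norm_sq, hy]
  have hnorm : ‖star S (S y)‖ ≤ ‖y‖ :=
    ((star S).le_of_opNorm_le ((norm_star S).trans_le hS) (S y)).trans_eq (by rw [one_mul, hy])
  have hsq : ‖star S (S y) - y‖ ^ 2 ≤ 0 := by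
    rw [@norm_sub_sq ℂ, hre]
    nlinarith [norm_nonneg (star S (S y))]
  rw [← sub_eq_zero, ← norm_eq_zero]
  exact pow_eq_zero_iff two_ne_zero |>.mp (le_antisymm hsq (sq_nonneg _))

theorem eq_smul_star_apply_of_norm_le_one {S : H →L[ℂ] H} (hS : ‖S‖ ≤ 1) {x y : H} {a : ℝ}
    (ha : 0 ≤ a) (hx : ‖x‖ = 1) (hy : ‖y‖ = a) (hSy : S y = (a : ℂ) • x) :
    y = (a : ℂ) • star S x := by
  have hnorm : ‖S y‖ = ‖y‖ := by
    rw [hSy, hy, norm_smul, hx, mul_one, Complex.norm_real, Real.norm_of_nonneg ha]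
  rw [← map_smul, ← hSy, star_apply_apply_eq_of_norm_le_one hS hnorm]

section Words

variable {d : ℕ}

noncomputable def starProd (A : Fin d → H →L[ℂ] H) (l : List (Fin d)) : H →L[ℂ] H :=
  (l.map fun i => star (A i)).prod

@[simp] theorem starProd_nil (A : Fin d → H →L[ℂ] H) : starProd A [] = 1 := rfl

@[simp] theorem starProd_cons (A : Fin d → H →L[ℂ] H) (i : Fin d) (l : List (Fin d)) :
    starProd A (i :: l) = star (A i) * starProd A l := List.prod_cons

theorem starProd_append (A : Fin d → H →L[ℂ] H) (l m : List (Fin d)) :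
    starProd A (l ++ m) = starProd A l * starProd A m := by
  simp [starProd]

theorem star_starProd (A : Fin d → H →L[ℂ] H) (l : List (Fin d)) :
    star (starProd A l) = (l.reverse.map A).prod := by
  induction l with
  | nil => simp
  | cons i l ih => simp [star_mul, ih]

/-- The value of `⟪V_β* V_μ V_ν* V_γ ψ, ψ⟫`: by the Cuntz relations, `V_ν* V_γ ψ` is `V_γ' ψ` if
`γ = ν ++ γ'`, is `V_ν'* ψ` if `ν = γ ++ ν'`, and vanishes otherwise. -/
noncomputable def cuntzMoment (α : Fin d → ℝ) (β μ ν γ : List (Fin d)) : ℂ :=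
  if ν <+: γ then (if β = μ ++ γ.drop ν.length then 1 else 0)
  else if γ <+: ν then
    (((ν.drop γ.length).map α).prod : ℂ) ^ 2 * (if β ++ ν.drop γ.length = μ then 1 else 0)
  else 0

/-- What the moments are computed from: the first columns `A i = R i 0`, `B j = T j 0` of a
bipartite protocol (see `IsEmbezzlingPair.of_bipartiteProtocol`). -/
structure IsEmbezzlingPair (A B : Fin d → H →L[ℂ] H) (ψ : H) (α : Fin d → ℝ) : Prop where
  commute : ∀ i j, Commute (A i) (B j)
  commute_star : ∀ i j, Commute (star (A i)) (B j)
  apply_apply : ∀ i j, A i (B j ψ) = (if i = j then (α i : ℂ) else 0) • ψ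
  left_apply : ∀ i, A i ψ = (α i : ℂ) • star (B i) ψ
  right_apply : ∀ i, B i ψ = (α i : ℂ) • star (A i) ψ
  norm_eq_one : ‖ψ‖ = 1
  pos : ∀ i, 0 < α i
  lt_one : ∀ i, α i < 1

namespace IsEmbezzlingPair

variable {A B : Fin d → H →L[ℂ] H} {ψ : H} {α : Fin d → ℝ}

theorem commute_star_right (hP : IsEmbezzlingPair A B ψ α) (i j : Fin d) :
    Commute (A i) (star (B j)) := by
  simpa using (hP.commute_star i j).star_star

theorem prod_map_ne_zero (hP : IsEmbezzlingPair A B ψ α) (l : List (Fin d)) :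
    ((l.map α).prod : ℂ) ≠ 0 := by
  exact_mod_cast (List.prod_pos <| List.forall_mem_map.mpr fun i _ => hP.pos i).ne'

theorem star_starProd_right_apply (hP : IsEmbezzlingPair A B ψ α) (l : List (Fin d)) :
    star (starProd B l) ψ = ((l.map α).prod : ℂ) • starProd A l ψ := by
  rw [star_starProd]
  exact list_prod_reverse_map_apply_eq_smul hP.commute_star hP.right_apply l

theorem star_starProd_left_apply (hP : IsEmbezzlingPair A B ψ α) (l : List (Fin d)) :
    star (starProd A l) ψ = ((l.map α).prod : ℂ) • starProd B l ψ := by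
  rw [star_starProd]
  exact list_prod_reverse_map_apply_eq_smul (fun i j => (hP.commute_star_right j i).symm)
    hP.left_apply l

theorem apply_star_apply (hP : IsEmbezzlingPair A B ψ α) (i j : Fin d) :
    A i (star (A j) ψ) = (if i = j then (1 : ℂ) else 0) • ψ := by
  have hαj : (α j : ℂ) ≠ 0 := by exact_mod_cast (hP.pos j).ne'
  have h := hP.apply_apply i j
  rw [hP.right_apply, map_smul] at h
  refine smul_right_injective H hαj (h.trans ?_)
  split_ifs with hij <;> simp [hij]

theorem apply_star_apply_starProd (hP : IsEmbezzlingPair A B ψ α) (i j : Fin d)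
    (l : List (Fin d)) :
    A i (star (A j) (starProd A l ψ)) = (if i = j then (1 : ℂ) else 0) • starProd A l ψ := by
  -- `V_l ψ` is a multiple of `W_l* ψ`, and `W_l*` commutes with `A i` and `(A j)*`.
  have hcomm : ∀ X : H →L[ℂ] H, (∀ k, Commute X (B k)) →
      ∀ x, X (star (starProd B l) x) = star (starProd B l) (X x) := fun X hX x => by
    have : Commute X (star (starProd B l)) := by
      rw [star_starProd]
      exact Commute.list_prod_right _ _ <| List.forall_mem_map.mpr fun k _ => hX k
    rw [← mul_apply_eq_comp, this.eq, mul_apply_eq_comp]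
  have hV : starProd A l ψ = ((l.map α).prod : ℂ)⁻¹ • star (starProd B l) ψ := by
    rw [hP.star_starProd_right_apply, smul_smul, inv_mul_cancel₀ (hP.prod_map_ne_zero l),
      one_smul]
  rw [hV, map_smul, map_smul, hcomm _ (hP.commute_star j), hcomm _ (hP.commute i),
    hP.apply_star_apply, map_smul, smul_comm]

theorem prod_map_lt_one (hP : IsEmbezzlingPair A B ψ α) {l : List (Fin d)} (hl : l ≠ []) :
    (l.map α).prod < 1 := by
  simpa using
    List.prod_map_lt_prod_map hl α (fun _ => 1) (fun i _ => hP.pos i) (fun i _ => hP.lt_one i)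

theorem star_starProd_apply_starProd (hP : IsEmbezzlingPair A B ψ α) (ν γ : List (Fin d)) :
    star (starProd A ν) (starProd A γ ψ) =
      if ν <+: γ then starProd A (γ.drop ν.length) ψ
      else if γ <+: ν then star (starProd A (ν.drop γ.length)) ψ
      else 0 := by
  induction ν generalizing γ with
  | nil => simp
  | cons i ν ih =>
    cases γ with
    | nil => simp
    | cons j γ =>
      rw [starProd_cons, starProd_cons, star_mul, star_star, mul_apply_eq_comp,
        mul_apply_eq_comp, hP.apply_star_apply_starProd]
      by_cases hij : i = j
      · simp [hij, ih]
      · simp [hij, Ne.symm hij]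

theorem inner_star_starProd_apply (hP : IsEmbezzlingPair A B ψ α) (l : List (Fin d)) :
    ⟪star (starProd A l) ψ, ψ⟫_ℂ = if l = [] then 1 else 0 := by
  split_ifs with hl
  · simp [hl, inner_self_eq_norm_sq_to_K, hP.norm_eq_one]
  have hfix : ⟪star (starProd A l) ψ, ψ⟫_ℂ =
      ((l.map α).prod : ℂ) ^ 2 * ⟪star (starProd A l) ψ, ψ⟫_ℂ := by
    calc ⟪star (starProd A l) ψ, ψ⟫_ℂ
        = ((l.map α).prod : ℂ) * ⟪ψ, star (starProd B l) ψ⟫_ℂ := by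
          rw [hP.star_starProd_left_apply, inner_smul_left, Complex.conj_ofReal,
            inner_star_apply_right]
      _ = ((l.map α).prod : ℂ) ^ 2 * ⟪star (starProd A l) ψ, ψ⟫_ℂ := by
          rw [hP.star_starProd_right_apply, inner_smul_right, inner_star_apply_left, sq,
            mul_assoc]
  have hsq : ((l.map α).prod : ℂ) ^ 2 ≠ 1 := by
    have hlt := hP.prod_map_lt_one hl
    have hpos := List.prod_pos (List.forall_mem_map.mpr fun i (_ : i ∈ l) => hP.pos i)
    exact_mod_cast ((sq_lt_one_iff₀ hpos.le).mpr hlt).ne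
  have hzero : (1 - ((l.map α).prod : ℂ) ^ 2) * ⟪star (starProd A l) ψ, ψ⟫_ℂ = 0 := by
    linear_combination hfix
  exact (mul_eq_zero.mp hzero).resolve_left (sub_ne_zero.mpr hsq.symm)

theorem inner_starProd_apply (hP : IsEmbezzlingPair A B ψ α) (l : List (Fin d)) :
    ⟪starProd A l ψ, ψ⟫_ℂ = if l = [] then 1 else 0 := by
  rw [← inner_conj_symm, ← inner_star_apply_left, hP.inner_star_starProd_apply]
  split_ifs <;> simp

theorem inner_star_starProd_apply_starProd (hP : IsEmbezzlingPair A B ψ α)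
    (a b : List (Fin d)) :
    ⟪star (starProd A a) (starProd A b ψ), ψ⟫_ℂ = if a = b then 1 else 0 := by
  induction a generalizing b with
  | nil => simp [hP.inner_starProd_apply, eq_comm]
  | cons i a ih =>
    cases b with
    | nil => simpa using hP.inner_star_starProd_apply (i :: a)
    | cons j b =>
      rw [starProd_cons, starProd_cons, star_mul, star_star, mul_apply_eq_comp,
        mul_apply_eq_comp, hP.apply_star_apply_starProd]
      by_cases hij : i = j
      · simp [hij, ih]
      · simp [hij]

theorem commute_starProd (hP : IsEmbezzlingPair A B ψ α) (l m : List (Fin d)) :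
    Commute (starProd A l) (starProd B m) :=
  commute_list_prod_map (fun i j => (hP.commute i j).star_star) l m

theorem commute_star_starProd (hP : IsEmbezzlingPair A B ψ α) (l m : List (Fin d)) :
    Commute (star (starProd A l)) (starProd B m) := by
  rw [star_starProd]
  exact commute_list_prod_map hP.commute_star_right l.reverse m

theorem inner_word_apply (hP : IsEmbezzlingPair A B ψ α) (β μ ν γ : List (Fin d)) :
    ⟪star (starProd A β) (starProd A μ (star (starProd A ν) (starProd A γ ψ))), ψ⟫_ℂ =
      cuntzMoment α β μ ν γ := by
  rw [hP.star_starProd_apply_starProd, cuntzMoment]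
  by_cases hνγ : ν <+: γ
  · rw [if_pos hνγ, if_pos hνγ, ← mul_apply_eq_comp (starProd A μ), ← starProd_append,
      hP.inner_star_starProd_apply_starProd]
  rw [if_neg hνγ, if_neg hνγ]
  by_cases hγν : γ <+: ν
  · rw [if_pos hγν, if_pos hγν]
    set ρ := ν.drop γ.length
    have hW : starProd A μ (starProd B ρ ψ) = starProd B ρ (starProd A μ ψ) := by
      rw [← mul_apply_eq_comp, (hP.commute_starProd μ ρ).eq, mul_apply_eq_comp]
    have hW' : ∀ x, star (starProd A β) (starProd B ρ x) =
        starProd B ρ (star (starProd A β) x) := fun x => by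
      rw [← mul_apply_eq_comp, (hP.commute_star_starProd β ρ).eq, mul_apply_eq_comp]
    rw [hP.star_starProd_left_apply, map_smul, map_smul, hW, hW', inner_smul_left,
      Complex.conj_ofReal, ← inner_star_apply_right, hP.star_starProd_right_apply,
      inner_smul_right, ← inner_star_apply_left, ← mul_apply_eq_comp, ← star_mul,
      ← starProd_append, hP.inner_star_starProd_apply_starProd]
    ring
  · rw [if_neg hγν, if_neg hγν, map_zero, map_zero, inner_zero_left]

theorem inner_moment (hP : IsEmbezzlingPair A B ψ α) (μ ν β γ : List (Fin d)) :
    ⟪(starProd A μ * star (starProd A ν) * starProd B β * star (starProd B γ)) ψ, ψ⟫_ℂ =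
      ((β.map α).prod : ℂ) * ((γ.map α).prod : ℂ) * cuntzMoment α β μ ν γ := by
  have hβ : starProd A μ * star (starProd A ν) * starProd B β =
      starProd B β * (starProd A μ * star (starProd A ν)) := by
    rw [mul_assoc, (hP.commute_star_starProd ν β).eq, ← mul_assoc, (hP.commute_starProd μ β).eq,
      mul_assoc]
  rw [hβ, mul_apply_eq_comp, mul_apply_eq_comp, ← inner_star_apply_right,
    hP.star_starProd_right_apply β, hP.star_starProd_right_apply γ, map_smul, inner_smul_left,
    inner_smul_right, Complex.conj_ofReal, ← inner_star_apply_left, mul_apply_eq_comp,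
    hP.inner_word_apply]
  ring

end IsEmbezzlingPair

theorem IsEmbezzlingPair.of_bipartiteProtocol {M : VonNeumannAlgebra H} [NeZero d]
    (hd : 2 ≤ d) {α : Fin d → ℝ} (hα : ∀ i, 0 < α i) (hsum : ∑ i, α i ^ 2 = 1)
    {R T : Fin d → Fin d → H →L[ℂ] H} {ψ : H} (hp : BipartiteProtocol M α R T ψ) :
    IsEmbezzlingPair (fun i => R i 0) (fun j => T j 0) ψ α := by
  obtain ⟨⟨hRM, hR⟩, ⟨hTM, hT⟩, hψ, hRT⟩ := hp
  have hcomm : ∀ X ∈ M, ∀ j, Commute X (T j 0) := fun X hX j =>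
    VonNeumannAlgebra.mem_commutant_iff.mp (hTM j 0) X hX
  have hcolR := sum_norm_sq_apply_le_of_norm_blockOp_le_one hR 0
  have hcolT := sum_norm_sq_apply_le_of_norm_blockOp_le_one hT 0
  have hTR : ∀ j i, T j 0 (R i 0 ψ) = (if j = i then (α j : ℂ) else 0) • ψ := fun j i => by
    rw [← mul_apply_eq_comp, ← (hcomm _ (hRM i 0) j).eq, mul_apply_eq_comp, hRT]
    rcases eq_or_ne i j with rfl | hij
    · simp
    · simp [hij, hij.symm]
  have hα₀ : ∀ i, 0 ≤ α i := fun i => (hα i).le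
  have hnT := norm_apply_eq_of_apply_apply_eq_ite_smul hcolR hcolT hψ hα₀ hsum hRT
  have hnR := norm_apply_eq_of_apply_apply_eq_ite_smul hcolT hcolR hψ hα₀ hsum hTR
  have : Nontrivial (Fin d) := Fin.nontrivial_iff_two_le.mpr hd
  exact
    { commute := fun i j => hcomm _ (hRM i 0) j
      commute_star := fun i j => hcomm _ (star_mem (hRM i 0)) j
      apply_apply := hRT
      left_apply := fun i => eq_smul_star_apply_of_norm_le_one
        (norm_le_one_of_sum_norm_sq_apply_le hcolT i) (hα₀ i) hψ (hnR i) (by simpa using hTR i i)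
      right_apply := fun i => eq_smul_star_apply_of_norm_le_one
        (norm_le_one_of_sum_norm_sq_apply_le hcolR i) (hα₀ i) hψ (hnT i) (by simpa using hRT i i)
      norm_eq_one := hψ
      pos := hα
      lt_one := lt_one_of_sum_sq_eq_one hα hsum }

end Words

theorem unique_state_on_Od_tensor_Od_general
    {H₁ : Type*} [NormedAddCommGroup H₁] [InnerProductSpace ℂ H₁] [CompleteSpace H₁]
    {H₂ : Type*} [NormedAddCommGroup H₂] [InnerProductSpace ℂ H₂] [CompleteSpace H₂]
    (M₁ : VonNeumannAlgebra H₁) (M₂ : VonNeumannAlgebra H₂)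
    {d : ℕ} [NeZero d] (hd : 2 ≤ d)
    (α : Fin d → ℝ) (hα : ∀ i, 0 < α i) (hsum : ∑ i, (α i) ^ 2 = 1)
    (R₁ T₁ : Fin d → Fin d → H₁ →L[ℂ] H₁) (ψ₁ : H₁)
    (R₂ T₂ : Fin d → Fin d → H₂ →L[ℂ] H₂) (ψ₂ : H₂)
    (hproto₁ : BipartiteProtocol M₁ α R₁ T₁ ψ₁)
    (hproto₂ : BipartiteProtocol M₂ α R₂ T₂ ψ₂) :
    ∀ μ ν β γ : List (Fin d),
      ⟪((μ.map (fun i => adjoint (R₁ i 0))).prod *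
          adjoint ((ν.map (fun i => adjoint (R₁ i 0))).prod) *
          (β.map (fun j => adjoint (T₁ j 0))).prod *
          adjoint ((γ.map (fun j => adjoint (T₁ j 0))).prod)) ψ₁, ψ₁⟫_ℂ =
      ⟪((μ.map (fun i => adjoint (R₂ i 0))).prod *
          adjoint ((ν.map (fun i => adjoint (R₂ i 0))).prod) *
          (β.map (fun j => adjoint (T₂ j 0))).prod *
          adjoint ((γ.map (fun j => adjoint (T₂ j 0))).prod)) ψ₂, ψ₂⟫_ℂ := by
  intro μ ν β γ
  simp only [← star_eq_adjoint]
  exact ((IsEmbezzlingPair.of_bipartiteProtocol hd hα hsum hproto₁).inner_moment μ ν β γ).trans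
    ((IsEmbezzlingPair.of_bipartiteProtocol hd hα hsum hproto₂).inner_moment μ ν β γ).symm

/-- Any two bipartite exact embezzlement protocols for `α` with faithful marginal states
induce the same state on `O_d ⊗_max O_d`: writing `V_{a,i} = (R_a i 0)*` and
`W_{a,j} = (T_a j 0)*`, all the moments `⟨V_μ V_ν* W_β W_γ* ψ_a, ψ_a⟩` agree for `a = 1, 2`. -/
theorem unique_state_on_Od_tensor_Od
    {H₁ : Type*} [NormedAddCommGroup H₁] [InnerProductSpace ℂ H₁] [CompleteSpace H₁]
    {H₂ : Type*} [NormedAddCommGroup H₂] [InnerProductSpace ℂ H₂] [CompleteSpace H₂]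
    (M₁ : VonNeumannAlgebra H₁) (M₂ : VonNeumannAlgebra H₂)
    {d : ℕ} [NeZero d] (hd : 2 ≤ d)
    (α : Fin d → ℝ) (hα : ∀ i, 0 < α i) (hsum : ∑ i, (α i) ^ 2 = 1)
    (R₁ T₁ : Fin d → Fin d → H₁ →L[ℂ] H₁) (ψ₁ : H₁)
    (R₂ T₂ : Fin d → Fin d → H₂ →L[ℂ] H₂) (ψ₂ : H₂)
    (hproto₁ : BipartiteProtocol M₁ α R₁ T₁ ψ₁)
    (hproto₂ : BipartiteProtocol M₂ α R₂ T₂ ψ₂)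
    (hfaith₁ : ∀ X ∈ M₁, X.IsPositive → ⟪X ψ₁, ψ₁⟫_ℂ = 0 → X = 0)
    (hfaith₁' : ∀ Y ∈ M₁.commutant, Y.IsPositive → ⟪Y ψ₁, ψ₁⟫_ℂ = 0 → Y = 0)
    (hfaith₂ : ∀ X ∈ M₂, X.IsPositive → ⟪X ψ₂, ψ₂⟫_ℂ = 0 → X = 0)
    (hfaith₂' : ∀ Y ∈ M₂.commutant, Y.IsPositive → ⟪Y ψ₂, ψ₂⟫_ℂ = 0 → Y = 0) :
    ∀ μ ν β γ : List (Fin d),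
      ⟪((μ.map (fun i => adjoint (R₁ i 0))).prod *
          adjoint ((ν.map (fun i => adjoint (R₁ i 0))).prod) *
          (β.map (fun j => adjoint (T₁ j 0))).prod *
          adjoint ((γ.map (fun j => adjoint (T₁ j 0))).prod)) ψ₁, ψ₁⟫_ℂ =
      ⟪((μ.map (fun i => adjoint (R₂ i 0))).prod *
          adjoint ((ν.map (fun i => adjoint (R₂ i 0))).prod) *
          (β.map (fun j => adjoint (T₂ j 0))).prod *
          adjoint ((γ.map (fun j => adjoint (T₂ j 0))).prod)) ψ₂, ψ₂⟫_ℂ :=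
  unique_state_on_Od_tensor_Od_general M₁ M₂ hd α hα hsum R₁ T₁ ψ₁ R₂ T₂ ψ₂ hproto₁ hproto₂
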